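/- No-cloning theorem: there is no unitary operator U on H ⊗ H and fixed state |e⟩ such that U(|ψ⟩⊗|e⟩) = |ψ⟩⊗|ψ⟩ for all unit vectors |ψ⟩ in H, provided dim H ≥ 2. -/

import Mathlib

open scoped TensorProduct InnerProductSpace

/-!
A cloner preserves the inner product of `ψ ⊗ e` and `φ ⊗ e`, which is `⟪ψ, φ⟫`, while sending
the pair to `ψ ⊗ ψ` and `φ ⊗ φ`, whose inner product is `⟪ψ, φ⟫ ^ 2`. So every pair of unit
vectors would have overlap `0` or `1`; in dimension at least two, `ψ` and `(3ψ + 4χ)/5` with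
`χ ⊥ ψ` have overlap `3/5`.
-/

section

variable {𝕜 E : Type*} [RCLike 𝕜] [NormedAddCommGroup E] [InnerProductSpace 𝕜 E]

theorem inner_mul_inner_eq_of_clones
    (inn : TensorProduct 𝕜 E E → TensorProduct 𝕜 E E → 𝕜)
    (hinn : ∀ a b a' b' : E, inn (a ⊗ₜ[𝕜] b) (a' ⊗ₜ[𝕜] b') = ⟪a, a'⟫_𝕜 * ⟪b, b'⟫_𝕜)
    (U : TensorProduct 𝕜 E E → TensorProduct 𝕜 E E) (hU : ∀ x y, inn (U x) (U y) = inn x y)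
    {e ψ φ : E} (hψ : U (ψ ⊗ₜ[𝕜] e) = ψ ⊗ₜ[𝕜] ψ) (hφ : U (φ ⊗ₜ[𝕜] e) = φ ⊗ₜ[𝕜] φ) :
    ⟪ψ, φ⟫_𝕜 * ⟪ψ, φ⟫_𝕜 = ⟪ψ, φ⟫_𝕜 * ⟪e, e⟫_𝕜 :=
  calc ⟪ψ, φ⟫_𝕜 * ⟪ψ, φ⟫_𝕜 = inn (ψ ⊗ₜ[𝕜] ψ) (φ ⊗ₜ[𝕜] φ) := (hinn ψ ψ φ φ).symm
    _ = inn (U (ψ ⊗ₜ[𝕜] e)) (U (φ ⊗ₜ[𝕜] e)) := by rw [hψ, hφ]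
    _ = inn (ψ ⊗ₜ[𝕜] e) (φ ⊗ₜ[𝕜] e) := hU _ _
    _ = ⟪ψ, φ⟫_𝕜 * ⟪e, e⟫_𝕜 := hinn ψ e φ e

theorem exists_orthonormal_pair_of_one_lt_finrank (h : 1 < Module.finrank 𝕜 E) :
    ∃ a b : E, ‖a‖ = 1 ∧ ‖b‖ = 1 ∧ ⟪a, b⟫_𝕜 = 0 := by
  have : FiniteDimensional 𝕜 E := Module.finite_of_finrank_pos (by omega)
  have hv := (stdOrthonormalBasis 𝕜 E).orthonormal
  refine ⟨_, _, hv.1 ⟨0, by omega⟩, hv.1 ⟨1, h⟩, hv.2 ?_⟩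
  simp

theorem exists_norm_eq_one_inner_eq_three_fifths (h : 1 < Module.finrank 𝕜 E) :
    ∃ ψ φ : E, ‖ψ‖ = 1 ∧ ‖φ‖ = 1 ∧ ⟪ψ, φ⟫_𝕜 = 3 / 5 := by
  obtain ⟨a, b, ha, hb, hab⟩ := exists_orthonormal_pair_of_one_lt_finrank h
  have haa : ⟪a, a⟫_𝕜 = 1 := by simp [inner_self_eq_norm_sq_to_K, ha]
  refine ⟨a, (3 / 5 : 𝕜) • a + (4 / 5 : 𝕜) • b, ha, ?_, ?_⟩
  · have hperp : ⟪(3 / 5 : 𝕜) • a, (4 / 5 : 𝕜) • b⟫_𝕜 = 0 := by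
      simp [inner_smul_left, inner_smul_right, hab]
    have hsq := norm_add_sq_eq_norm_sq_add_norm_sq_of_inner_eq_zero _ _ hperp
    rw [norm_smul, norm_smul, ha, hb] at hsq
    norm_num at hsq
    nlinarith [norm_nonneg ((3 / 5 : 𝕜) • a + (4 / 5 : 𝕜) • b)]
  · rw [inner_add_right, inner_smul_right, inner_smul_right, haa, hab]
    ring

end

theorem no_cloning_general
    {H : Type*} [NormedAddCommGroup H] [InnerProductSpace ℂ H]
    (hdim : 2 ≤ Module.finrank ℂ H)
    (inn : TensorProduct ℂ H H → TensorProduct ℂ H H → ℂ)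
    (hinn : ∀ (a b a' b' : H), inn (a ⊗ₜ[ℂ] b) (a' ⊗ₜ[ℂ] b') = ⟪a, a'⟫_ℂ * ⟪b, b'⟫_ℂ)
    (U : TensorProduct ℂ H H →ₗ[ℂ] TensorProduct ℂ H H)
    (hU : ∀ x y, inn (U x) (U y) = inn x y)
    (e : H) (he : ‖e‖ = 1) :
    ¬ (∀ ψ : H, ‖ψ‖ = 1 → U (ψ ⊗ₜ[ℂ] e) = ψ ⊗ₜ[ℂ] ψ) := by
  intro hclone
  obtain ⟨ψ, φ, hψ, hφ, hψφ⟩ := exists_norm_eq_one_inner_eq_three_fifths (𝕜 := ℂ) hdim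
  have hee : ⟪e, e⟫_ℂ = 1 := by simp [inner_self_eq_norm_sq_to_K, he]
  have hsq := inner_mul_inner_eq_of_clones inn hinn U hU (hclone ψ hψ) (hclone φ hφ)
  rw [hψφ, hee] at hsq
  norm_num at hsq

/-- No-cloning theorem: there is no unitary (inner-product-preserving linear) map `U`
on `H ⊗ H` and fixed unit state `e` such that `U (ψ ⊗ e) = ψ ⊗ ψ` for all unit
vectors `ψ`, provided `dim H ≥ 2`.  The inner product on `H ⊗ H` is given by a
function `inn` satisfying `inn (a ⊗ b) (a' ⊗ b') = ⟪a,a'⟫⟪b,b'⟫`. -/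
theorem no_cloning
    {H : Type*} [NormedAddCommGroup H] [InnerProductSpace ℂ H] [FiniteDimensional ℂ H]
    (hdim : 2 ≤ Module.finrank ℂ H)
    (inn : TensorProduct ℂ H H → TensorProduct ℂ H H → ℂ)
    (hinn : ∀ (a b a' b' : H), inn (a ⊗ₜ[ℂ] b) (a' ⊗ₜ[ℂ] b') = ⟪a, a'⟫_ℂ * ⟪b, b'⟫_ℂ)
    (U : TensorProduct ℂ H H →ₗ[ℂ] TensorProduct ℂ H H)
    (hU : ∀ x y, inn (U x) (U y) = inn x y)
    (e : H) (he : ‖e‖ = 1) :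
    ¬ (∀ ψ : H, ‖ψ‖ = 1 → U (ψ ⊗ₜ[ℂ] e) = ψ ⊗ₜ[ℂ] ψ) :=
  no_cloning_general hdim inn hinn U hU e he
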